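/- For all reals y > 0, P > 0, and N > 0, the pointwise density bound (1/(πN)) · exp(−(y² + P)/N) · I₀(2y√P/N) ≤ (1/(2√π N)) · exp(−(y − √P)²/N) / √(2y√P/N) holds. -/

import Mathlib

/-! On `[0, π]` the concavity bound `cos θ ≤ 1 - 2θ²/π²` dominates the integrand of `I₀(z)` by
`exp z` times a Gaussian; extending that Gaussian to the half line gives
`I₀(z) ≤ exp z · √(π / 2z) / 2 ≤ √π exp z / (2√z)`. Multiplying by the Rice prefactor, the
`exp z` recombines with `exp (-(y² + P)/N)` into `exp (-(y - √P)²/N)`. -/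

open Real MeasureTheory

/-- Modified Bessel function of the first kind of order zero,
via `I₀(z) = (1/π) ∫₀^π exp(z cos θ) dθ`. -/
noncomputable def besselI0 (z : ℝ) : ℝ :=
  (1 / Real.pi) * ∫ θ in (0:ℝ)..Real.pi, Real.exp (z * Real.cos θ)

lemma exp_mul_cos_le_exp_mul_exp_neg_sq {z θ : ℝ} (hz : 0 ≤ z) (hθ : |θ| ≤ π) :
    exp (z * cos θ) ≤ exp z * exp (-(2 * z / π ^ 2) * θ ^ 2) := by
  rw [← exp_add, exp_le_exp]
  have hcos := mul_le_mul_of_nonneg_left (cos_le_one_sub_mul_cos_sq hθ) hz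
  have hrw : z * (1 - 2 / π ^ 2 * θ ^ 2) = z + -(2 * z / π ^ 2) * θ ^ 2 := by ring
  linarith

lemma intervalIntegral_exp_neg_mul_sq_le {a b : ℝ} (ha : 0 < a) (hb : 0 ≤ b) :
    ∫ θ in (0:ℝ)..b, exp (-a * θ ^ 2) ≤ √(π / a) / 2 := by
  rw [← integral_gaussian_Ioi, intervalIntegral.integral_of_le hb]
  refine setIntegral_mono_set (integrable_exp_neg_mul_sq ha).integrableOn
    (.of_forall fun _ ↦ (exp_pos _).le) (.of_forall fun _ hx ↦ hx.1)

lemma besselI0_le_exp_mul_sqrt {z : ℝ} (hz : 0 < z) :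
    besselI0 z ≤ exp z * √(π / (2 * z)) / 2 := by
  set a := 2 * z / π ^ 2 with ha_def
  have ha : 0 < a := by positivity
  have hgauss : ∫ θ in (0:ℝ)..π, exp (z * cos θ) ≤ exp z * (√(π / a) / 2) := by
    calc ∫ θ in (0:ℝ)..π, exp (z * cos θ)
        ≤ ∫ θ in (0:ℝ)..π, exp z * exp (-a * θ ^ 2) := by
          refine intervalIntegral.integral_mono_on pi_pos.le
            ((by fun_prop : Continuous _).intervalIntegrable _ _)
            ((by fun_prop : Continuous _).intervalIntegrable _ _)
            fun θ hθ ↦ exp_mul_cos_le_exp_mul_exp_neg_sq hz.le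
              ((abs_of_nonneg hθ.1).trans_le hθ.2)
      _ ≤ exp z * (√(π / a) / 2) := by
          rw [intervalIntegral.integral_const_mul]
          gcongr
          exact intervalIntegral_exp_neg_mul_sq_le ha pi_pos.le
  have hsqrt : √(π / a) = π * √(π / (2 * z)) := by
    rw [show π / a = π ^ 2 * (π / (2 * z)) by rw [ha_def]; field_simp, sqrt_mul (by positivity),
      sqrt_sq pi_pos.le]
  calc besselI0 z ≤ 1 / π * (exp z * (√(π / a) / 2)) := by
        unfold besselI0
        exact mul_le_mul_of_nonneg_left hgauss (by positivity)
    _ = exp z * √(π / (2 * z)) / 2 := by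
        rw [hsqrt]
        field_simp

lemma besselI0_le_sqrt_pi_mul_exp_div {z : ℝ} (hz : 0 < z) :
    besselI0 z ≤ √π * exp z / (2 * √z) := by
  have hle : √(π / (2 * z)) ≤ √π / √z := by
    rw [← sqrt_div pi_pos.le]
    gcongr
    linarith
  calc besselI0 z ≤ exp z * √(π / (2 * z)) / 2 := besselI0_le_exp_mul_sqrt hz
    _ ≤ exp z * (√π / √z) / 2 := by gcongr
    _ = √π * exp z / (2 * √z) := by ring

/-- Pointwise upper bound on the Rice output density. -/
theorem rice_density_pointwise_bound (y P N : ℝ) (hy : 0 < y) (hP : 0 < P) (hN : 0 < N) :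
    (1 / (Real.pi * N)) * Real.exp (-(y ^ 2 + P) / N) * besselI0 (2 * y * Real.sqrt P / N) ≤
      (1 / (2 * Real.sqrt Real.pi * N)) * Real.exp (-(y - Real.sqrt P) ^ 2 / N) /
        Real.sqrt (2 * y * Real.sqrt P / N) := by
  set z := 2 * y * √P / N
  have hz : 0 < z := by positivity
  have hexp : exp (-(y - √P) ^ 2 / N) = exp (-(y ^ 2 + P) / N) * exp z := by
    rw [← exp_add, sub_sq, sq_sqrt hP.le]
    congr 1
    simp only [z]
    field_simp
    ring
  have hπ : √π * √π = π := mul_self_sqrt pi_pos.le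
  calc 1 / (π * N) * exp (-(y ^ 2 + P) / N) * besselI0 z
      ≤ 1 / (π * N) * exp (-(y ^ 2 + P) / N) * (√π * exp z / (2 * √z)) := by
        gcongr
        exact besselI0_le_sqrt_pi_mul_exp_div hz
    _ = 1 / (2 * √π * N) * exp (-(y - √P) ^ 2 / N) / √z := by
        rw [hexp]
        set s := √π
        rw [← hπ]
        field_simp
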